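/- arXiv:1709.06989 — 2 statements merged into one kernel-verified Lean document; each statement's English description precedes it below -/
import Mathlib

section
/- Let k ≤ d-1 and define V : ℝ^d → ℝ by V(x) = (1 + |x₁|² + … + |x_k|² + |x_{k+1}|³ + … + |x_{d-1}|³ + |x_d|)^{-1}. Then V ∈ L^q(ℝ^d) for every q > (k+2)/2 + (d-1-k)/3. -/
open MeasureTheory

/-- The summand profile of the potential. -/
private noncomputable def pot (d k : ℕ) (x : Fin d → ℝ) (i : Fin d) : ℝ :=
  if (i : ℕ) < k then x i ^ 2 else if (i : ℕ) < d - 1 then |x i| ^ 3 else |x i|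

/-- AM-GM weights. -/
private noncomputable def wgt (d k : ℕ) (q₀ : ℝ) (i : Fin d) : ℝ :=
  if (i : ℕ) < k then 1 / (2 * q₀) else if (i : ℕ) < d - 1 then 1 / (3 * q₀) else 1 / q₀

private lemma sum_ite_three (d k : ℕ) (hd : 1 ≤ d) (hk : k ≤ d - 1) (c₂ c₃ c₁ : ℝ) :
    ∑ i : Fin d, (if (i : ℕ) < k then c₂ else if (i : ℕ) < d - 1 then c₃ else c₁)
      = k * c₂ + ((d - 1 - k : ℕ) : ℝ) * c₃ + c₁ := by
  obtain ⟨m, rfl⟩ : ∃ m, d = m + 1 := ⟨d - 1, by omega⟩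
  have hk' : k ≤ m := by omega
  simp only [Nat.add_sub_cancel]
  rw [Fin.sum_univ_eq_sum_range (fun n => if n < k then c₂ else if n < m then c₃ else c₁)]
  rw [Finset.sum_range_succ, if_neg (by omega : ¬ m < k), if_neg (lt_irrefl m)]
  have hcongr : ∀ n ∈ Finset.range m,
      (if n < k then c₂ else if n < m then c₃ else c₁) = if n < k then c₂ else c₃ := by
    intro n hn
    have hnm := Finset.mem_range.mp hn
    by_cases h : n < k
    · simp [h]
    · simp [h, hnm]
  rw [Finset.sum_congr rfl hcongr, Finset.range_eq_Ico,
    ← Finset.sum_Ico_consecutive _ (Nat.zero_le k) hk',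
    Finset.sum_congr rfl (fun n hn => if_pos (Finset.mem_Ico.mp hn).2),
    Finset.sum_congr rfl
      (fun n hn => if_neg (by have := (Finset.mem_Ico.mp hn).1; omega : ¬ n < k))]
  simp [Nat.card_Ico, nsmul_eq_mul]

private lemma key_factor {q₀ : ℝ} (hq₀ : 0 < q₀) (t : ℝ) (e : ℕ) (he1 : 1 ≤ e) (he3 : e ≤ 3)
    {ww : ℝ} (hww : (e : ℝ) * ww = 1 / q₀) (hw0 : 0 ≤ ww) :
    (1 + |t| ^ e) ^ (-ww) ≤ 7 ^ ww * (1 + |t|) ^ (-(1 / q₀)) := by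
  have hu : 0 ≤ |t| := abs_nonneg t
  set u := |t| with hudef
  have h7 : (1 + u) ^ e ≤ 7 * (1 + u ^ e) := by
    interval_cases e
    · nlinarith
    · nlinarith [sq_nonneg (u - 1)]
    · nlinarith [sq_nonneg (u - 1), mul_nonneg hu (sq_nonneg (u - 1))]
  have hb2 : (0:ℝ) < 1 + u := by positivity
  have hbase : (0:ℝ) < 1 + u ^ e := by positivity
  have h9 : ((1 + u) ^ e / 7 : ℝ) ^ ww ≤ (1 + u ^ e) ^ ww :=
    Real.rpow_le_rpow (by positivity) (by linarith) hw0
  have h10 : ((1 + u) ^ e / 7 : ℝ) ^ ww = (1 + u) ^ (1 / q₀) / 7 ^ ww := by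
    rw [Real.div_rpow (by positivity) (by norm_num), ← Real.rpow_natCast (1 + u) e,
      ← Real.rpow_mul hb2.le, hww]
  rw [h10] at h9
  have h7w : (0:ℝ) < 7 ^ ww := Real.rpow_pos_of_pos (by norm_num) _
  have hP : (0:ℝ) < (1 + u) ^ (1 / q₀) := Real.rpow_pos_of_pos hb2 _
  rw [Real.rpow_neg hbase.le, Real.rpow_neg hb2.le]
  calc ((1 + u ^ e) ^ ww)⁻¹ ≤ ((1 + u) ^ (1 / q₀) / 7 ^ ww)⁻¹ :=
        inv_anti₀ (by positivity) h9
    _ = 7 ^ ww * ((1 + u) ^ (1 / q₀))⁻¹ := by rw [inv_div]; ring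

/-- Theorem 2 integrability: the potential profile
`V(x) = (1 + |x₁|² + … + |x_k|² + |x_{k+1}|³ + … + |x_{d-1}|³ + |x_d|)⁻¹`
belongs to `L^q(ℝ^d)` for every `q > (k+2)/2 + (d-1-k)/3`. -/
theorem anisotropic_potential_in_Lq
    (d k : ℕ) (hd : 1 ≤ d) (hk : k ≤ d - 1)
    (V : (Fin d → ℝ) → ℝ)
    (hV : ∀ x, V x = (1 + ∑ i : Fin d,
      (if (i : ℕ) < k then x i ^ 2
        else if (i : ℕ) < d - 1 then |x i| ^ 3 else |x i|))⁻¹)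
    (q : ℝ) (hq : ((k : ℝ) + 2) / 2 + ((d : ℝ) - 1 - k) / 3 < q) :
    MemLp V (ENNReal.ofReal q) volume := by
  classical
  set q₀ : ℝ := ((k : ℝ) + 2) / 2 + ((d : ℝ) - 1 - k) / 3 with hq₀def
  have hkd : (k : ℝ) ≤ (d : ℝ) - 1 := by
    have h : ((k : ℕ) : ℝ) ≤ ((d - 1 : ℕ) : ℝ) := Nat.cast_le.mpr hk
    rwa [Nat.cast_sub hd, Nat.cast_one] at h
  have hknn : (0:ℝ) ≤ (k : ℝ) := Nat.cast_nonneg k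
  have hq₀1 : 1 ≤ q₀ := by rw [hq₀def]; linarith
  have hq₀pos : 0 < q₀ := lt_of_lt_of_le one_pos hq₀1
  have hq' : q₀ < q := hq
  have hq1 : (1:ℝ) < q := lt_of_le_of_lt hq₀1 hq'
  have hqpos : (0:ℝ) < q := by linarith
  have hq₀ne : q₀ ≠ 0 := hq₀pos.ne'
  -- basic facts about pot and wgt
  have hV' : ∀ x, V x = (1 + ∑ i : Fin d, pot d k x i)⁻¹ := hV
  have ha_nonneg : ∀ (x : Fin d → ℝ) (i : Fin d), 0 ≤ pot d k x i := by
    intro x i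
    unfold pot
    split_ifs <;> positivity
  have hw_nonneg : ∀ i : Fin d, 0 ≤ wgt d k q₀ i := by
    intro i
    unfold wgt
    split_ifs <;> positivity
  have hw_le_one : ∀ i : Fin d, wgt d k q₀ i ≤ 1 := by
    intro i
    unfold wgt
    split_ifs
    · rw [div_le_one (by linarith)]; linarith
    · rw [div_le_one (by linarith)]; linarith
    · rw [div_le_one (by linarith)]; linarith
  have hcast : ((d - 1 - k : ℕ) : ℝ) = (d : ℝ) - 1 - k := by
    rw [Nat.cast_sub hk, Nat.cast_sub hd, Nat.cast_one]
  have hw_sum : ∑ i : Fin d, wgt d k q₀ i = 1 := by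
    unfold wgt
    rw [sum_ite_three d k hd hk, hcast]
    field_simp
    rw [hq₀def]
    ring
  -- the comparison function
  set G : (Fin d → ℝ) → ℝ := fun x => ∏ i : Fin d, (1 + |x i|) ^ (-(1 / q₀)) with hGdef
  have hGnn : ∀ x, 0 ≤ G x := by
    intro x
    apply Finset.prod_nonneg
    intro i _
    exact Real.rpow_nonneg (by positivity) _
  -- per-coordinate bound
  have hfac : ∀ (x : Fin d → ℝ) (i : Fin d),
      (1 + pot d k x i) ^ (-(wgt d k q₀ i))
        ≤ 7 ^ (wgt d k q₀ i) * (1 + |x i|) ^ (-(1 / q₀)) := by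
    intro x i
    rcases lt_or_ge (i : ℕ) k with h1 | h1
    · have hpot : pot d k x i = |x i| ^ 2 := by unfold pot; rw [if_pos h1, sq_abs]
      have hwgt : wgt d k q₀ i = 1 / (2 * q₀) := by unfold wgt; rw [if_pos h1]
      rw [hpot, hwgt]
      refine key_factor hq₀pos (x i) 2 (by norm_num) (by norm_num) ?_ (by positivity)
      push_cast
      field_simp
    · rcases lt_or_ge (i : ℕ) (d - 1) with h2 | h2
      · have hpot : pot d k x i = |x i| ^ 3 := by
          unfold pot; rw [if_neg (by omega), if_pos h2]
        have hwgt : wgt d k q₀ i = 1 / (3 * q₀) := by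
          unfold wgt; rw [if_neg (by omega), if_pos h2]
        rw [hpot, hwgt]
        refine key_factor hq₀pos (x i) 3 (by norm_num) (by norm_num) ?_ (by positivity)
        push_cast
        field_simp
      · have hpot : pot d k x i = |x i| ^ 1 := by
          unfold pot; rw [if_neg (by omega), if_neg (by omega), pow_one]
        have hwgt : wgt d k q₀ i = 1 / q₀ := by
          unfold wgt; rw [if_neg (by omega), if_neg (by omega)]
        rw [hpot, hwgt]
        refine key_factor hq₀pos (x i) 1 (by norm_num) (by norm_num) ?_ (by positivity)
        push_cast
        ring
  -- the main pointwise bound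
  have hmain : ∀ x, V x ≤ 7 * G x := by
    intro x
    have hz_nonneg : ∀ i ∈ Finset.univ, (0:ℝ) ≤ 1 + pot d k x i := by
      intro i _
      have := ha_nonneg x i
      linarith
    have hamgm : ∏ i : Fin d, (1 + pot d k x i) ^ (wgt d k q₀ i)
        ≤ 1 + ∑ i : Fin d, pot d k x i := by
      calc ∏ i : Fin d, (1 + pot d k x i) ^ (wgt d k q₀ i)
          ≤ ∑ i : Fin d, wgt d k q₀ i * (1 + pot d k x i) :=
            Real.geom_mean_le_arith_mean_weighted Finset.univ (wgt d k q₀)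
              (fun i => 1 + pot d k x i) (fun i _ => hw_nonneg i) hw_sum hz_nonneg
        _ = ∑ i : Fin d, wgt d k q₀ i + ∑ i : Fin d, wgt d k q₀ i * pot d k x i := by
            rw [← Finset.sum_add_distrib]
            exact Finset.sum_congr rfl fun i _ => by ring
        _ ≤ 1 + ∑ i : Fin d, pot d k x i := by
            rw [hw_sum]
            gcongr with i _
            exact mul_le_of_le_one_left (ha_nonneg x i) (hw_le_one i)
    have hPpos : 0 < ∏ i : Fin d, (1 + pot d k x i) ^ (wgt d k q₀ i) :=
      Finset.prod_pos fun i _ => Real.rpow_pos_of_pos (by have := ha_nonneg x i; linarith) _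
    have h1 : V x ≤ (∏ i : Fin d, (1 + pot d k x i) ^ (wgt d k q₀ i))⁻¹ := by
      rw [hV' x]
      exact inv_anti₀ hPpos hamgm
    have h2 : (∏ i : Fin d, (1 + pot d k x i) ^ (wgt d k q₀ i))⁻¹
        = ∏ i : Fin d, (1 + pot d k x i) ^ (-(wgt d k q₀ i)) := by
      rw [← Finset.prod_inv_distrib]
      exact Finset.prod_congr rfl fun i _ =>
        (Real.rpow_neg (by have := ha_nonneg x i; linarith) _).symm
    have h3 : ∏ i : Fin d, (1 + pot d k x i) ^ (-(wgt d k q₀ i))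
        ≤ ∏ i : Fin d, (7:ℝ) ^ (wgt d k q₀ i) * (1 + |x i|) ^ (-(1 / q₀)) := by
      apply Finset.prod_le_prod
      · intro i _
        exact Real.rpow_nonneg (by have := ha_nonneg x i; linarith) _
      · intro i _
        exact hfac x i
    have h4 : ∏ i : Fin d, (7:ℝ) ^ (wgt d k q₀ i) * (1 + |x i|) ^ (-(1 / q₀)) = 7 * G x := by
      rw [Finset.prod_mul_distrib, ← Real.rpow_sum_of_pos (by norm_num : (0:ℝ) < 7), hw_sum,
        Real.rpow_one, hGdef]
    calc V x ≤ (∏ i : Fin d, (1 + pot d k x i) ^ (wgt d k q₀ i))⁻¹ := h1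
      _ = ∏ i : Fin d, (1 + pot d k x i) ^ (-(wgt d k q₀ i)) := h2
      _ ≤ ∏ i : Fin d, (7:ℝ) ^ (wgt d k q₀ i) * (1 + |x i|) ^ (-(1 / q₀)) := h3
      _ = 7 * G x := h4
  -- measurability
  have hGmeas : Measurable G := by
    rw [hGdef]
    apply Finset.measurable_prod
    intro i _
    fun_prop
  have hVmeas : Measurable V := by
    have hVfun : V = fun x => (1 + ∑ i : Fin d, pot d k x i)⁻¹ := funext hV'
    rw [hVfun]
    refine (measurable_const.add (Finset.measurable_sum _ fun i _ => ?_)).inv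
    unfold pot
    split_ifs with h1 h2
    · exact (measurable_pi_apply i).pow_const 2
    · exact (measurable_pi_apply i).abs.pow_const 3
    · exact (measurable_pi_apply i).abs
  -- one-dimensional integrability
  have h1d : Integrable (fun t : ℝ => (1 + |t|) ^ (-(q / q₀))) volume := by
    have hr : (1:ℝ) < q / q₀ := (one_lt_div hq₀pos).mpr hq'
    have := integrable_one_add_norm (E := ℝ) (μ := volume) (r := q / q₀) (by simpa using hr)
    simpa [Real.norm_eq_abs] using this
  -- integrability of ‖G‖^q
  have hGq : Integrable (fun x : Fin d → ℝ => ‖G x‖ ^ q) volume := by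
    have heq : (fun x : Fin d → ℝ => ‖G x‖ ^ q)
        = fun x : Fin d → ℝ => ∏ i : Fin d, (1 + |x i|) ^ (-(q / q₀)) := by
      funext x
      rw [Real.norm_eq_abs, abs_of_nonneg (hGnn x), hGdef]
      rw [← Real.finset_prod_rpow _ _ (fun i _ => Real.rpow_nonneg (by positivity) _) q]
      refine Finset.prod_congr rfl fun i _ => ?_
      rw [← Real.rpow_mul (by positivity)]
      congr 1
      field_simp
    rw [heq]
    exact Integrable.fintype_prod (f := fun _ t => (1 + |t|) ^ (-(q / q₀))) fun i => h1d
  -- Memℒp of G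
  have hne0 : ENNReal.ofReal q ≠ 0 := by
    simp only [ne_eq, ENNReal.ofReal_eq_zero, not_le]
    exact hqpos
  have hnetop : ENNReal.ofReal q ≠ ⊤ := ENNReal.ofReal_ne_top
  have hMemG : MemLp G (ENNReal.ofReal q) volume := by
    have hiff := memLp_norm_rpow_iff (μ := volume) (p := ENNReal.ofReal q) (q := ENNReal.ofReal q)
      hGmeas.aestronglyMeasurable hne0 hnetop
    rw [ENNReal.div_self hne0 hnetop, memLp_one_iff_integrable] at hiff
    apply hiff.mp
    rw [ENNReal.toReal_ofReal hqpos.le]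
    exact hGq
  -- conclusion
  refine MemLp.of_le (hMemG.const_mul 7) hVmeas.aestronglyMeasurable
    (Filter.Eventually.of_forall fun x => ?_)
  have hVnn : 0 ≤ V x := by
    rw [hV' x]
    have hS : 0 ≤ ∑ i : Fin d, pot d k x i := Finset.sum_nonneg fun i _ => ha_nonneg x i
    have : (0:ℝ) < 1 + ∑ i : Fin d, pot d k x i := by linarith
    positivity
  have h7G : 0 ≤ 7 * G x := by
    have := hGnn x
    linarith
  rw [Real.norm_eq_abs, Real.norm_eq_abs, abs_of_nonneg hVnn, abs_of_nonneg h7G]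
  exact hmain x
end

section
/- Let n ≥ 1, N > 0, g(t) = ∫₀^t sin²(y) dy, and w_n(x) = (n² + |x'|⁴ + g(x_d)²)^{-N/2} on ℝ^{d-1} × ℝ. Then the function x ↦ ∂_{x_d} w_n(x)/sin(x_d) extends smoothly to all of ℝ^d and satisfies |∂_{x_d} w_n(x)/sin(x_d)| ≲ (n + |x'|² + |x_d|)^{-N-1} for all x, with implicit constant independent of n. -/
open Real

/-- For `w_n(x) = (n² + |x'|⁴ + g(x_d)²)^{-N/2}` with `g(t) = ∫₀^t sin²`, the function
`∂_{x_d} w_n / sin(x_d)` extends smoothly to all of `ℝ^d` and is bounded by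
`C (n + |x'|² + |x_d|)^{-N-1}` with `C` independent of `n ≥ 1`. -/
theorem chandrasekhar_weight_derivative_over_sine
    (d : ℕ) (hd : 1 ≤ d) (N : ℝ) (hN : 0 < N)
    (g : ℝ → ℝ) (hg : ∀ t, g t = ∫ y in (0 : ℝ)..t, Real.sin y ^ 2) :
    ∃ C > (0 : ℝ), ∀ n : ℕ, 1 ≤ n →
      ∃ F : ((Fin (d - 1) → ℝ) × ℝ) → ℝ,
        ContDiff ℝ (⊤ : ℕ∞) F ∧
        (∀ x : (Fin (d - 1) → ℝ) × ℝ,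
          deriv (fun t : ℝ =>
              (((n : ℝ) ^ 2 + (∑ i, x.1 i ^ 2) ^ 2 + g t ^ 2) ^ (-(N / 2)) : ℝ)) x.2 =
            Real.sin x.2 * F x) ∧
        (∀ x : (Fin (d - 1) → ℝ) × ℝ,
          |F x| ≤ C * ((n : ℝ) + (∑ i, x.1 i ^ 2) + |x.2|) ^ (-N - 1)) := by
  -- explicit formula for g
  have hgf : ∀ t, g t = (t - Real.sin t * Real.cos t) / 2 := by
    intro t
    rw [hg t, integral_sin_sq]
    simp; ring
  have hgd : ∀ t, HasDerivAt g (Real.sin t ^ 2) t := by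
    intro t
    have h1 : HasDerivAt (fun t : ℝ => (t - Real.sin t * Real.cos t) / 2)
        ((1 - (Real.cos t * Real.cos t + Real.sin t * (-Real.sin t))) / 2) t :=
      ((hasDerivAt_id t).sub ((Real.hasDerivAt_sin t).mul (Real.hasDerivAt_cos t))).div_const 2
    have h2 : (1 - (Real.cos t * Real.cos t + Real.sin t * (-Real.sin t))) / 2
        = Real.sin t ^ 2 := by
      have := Real.sin_sq_add_cos_sq t; nlinarith
    have h3 : g = fun t : ℝ => (t - Real.sin t * Real.cos t) / 2 := funext hgf
    rw [h3]
    exact h2 ▸ h1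
  have hgsm : ContDiff ℝ (⊤ : ℕ∞) g := by
    have h3 : g = fun t : ℝ => (t - Real.sin t * Real.cos t) / 2 := funext hgf
    rw [h3]
    exact ((contDiff_id.sub (Real.contDiff_sin.mul Real.contDiff_cos)).div_const 2)
  refine ⟨N * 4 ^ (N + 1), by positivity, fun n hn => ?_⟩
  set s : ((Fin (d - 1) → ℝ) × ℝ) → ℝ := fun x => ∑ i, x.1 i ^ 2 with hs
  have hssm : ContDiff ℝ (⊤ : ℕ∞) s :=
    ContDiff.sum fun i _ =>
      (((ContinuousLinearMap.proj i : (Fin (d-1) → ℝ) →L[ℝ] ℝ).contDiff).comp contDiff_fst).pow 2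
  have hsnn : ∀ x, 0 ≤ s x := fun x => Finset.sum_nonneg fun i _ => sq_nonneg _
  set u : ((Fin (d - 1) → ℝ) × ℝ) → ℝ := fun x => (n : ℝ) ^ 2 + s x ^ 2 + g x.2 ^ 2 with hu
  have hn1 : (1 : ℝ) ≤ (n : ℝ) := by exact_mod_cast hn
  have hux : ∀ x, u x = (n : ℝ) ^ 2 + s x ^ 2 + g x.2 ^ 2 := fun x => rfl
  have hupos : ∀ x, 0 < u x := by
    intro x
    have h1 : (1:ℝ) ≤ (n:ℝ)^2 := by nlinarith
    rw [hux x]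
    nlinarith [sq_nonneg (s x), sq_nonneg (g x.2)]
  refine ⟨fun x => -N * Real.sin x.2 * g x.2 * u x ^ (-(N / 2) - 1), ?_, ?_, ?_⟩
  · -- smoothness
    have husm : ContDiff ℝ (⊤ : ℕ∞) u :=
      (contDiff_const.add (hssm.pow 2)).add ((hgsm.comp contDiff_snd).pow 2)
    have hrp : ContDiff ℝ (⊤ : ℕ∞) (fun x => u x ^ (-(N / 2) - 1)) :=
      husm.rpow_const_of_ne fun x => (hupos x).ne'
    exact ((contDiff_const.mul (Real.contDiff_sin.comp contDiff_snd)).mul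
      (hgsm.comp contDiff_snd)).mul hrp
  · -- derivative identity
    intro x
    have hud : HasDerivAt (fun t : ℝ => (n : ℝ) ^ 2 + s x ^ 2 + g t ^ 2)
        (2 * g x.2 ^ 1 * Real.sin x.2 ^ 2) x.2 := by
      have := ((hgd x.2).pow 2)
      have h2 : HasDerivAt (fun t => g t ^ 2) ((2:ℕ) * g x.2 ^ (2 - 1) * Real.sin x.2 ^ 2) x.2 :=
        (hgd x.2).pow 2
      have h : HasDerivAt (fun t : ℝ => (n : ℝ) ^ 2 + s x ^ 2 + g t ^ 2)
          (0 + (2:ℕ) * g x.2 ^ (2 - 1) * Real.sin x.2 ^ 2) x.2 :=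
        (hasDerivAt_const x.2 ((n:ℝ)^2 + s x ^ 2)).add h2
      exact h.congr_deriv (by norm_num)
    have hd : HasDerivAt (fun t : ℝ => ((n : ℝ) ^ 2 + s x ^ 2 + g t ^ 2) ^ (-(N / 2)))
        (2 * g x.2 ^ 1 * Real.sin x.2 ^ 2 * (-(N / 2)) * u x ^ (-(N / 2) - 1)) x.2 :=
      hud.rpow_const (Or.inl (hupos x).ne')
    rw [hd.deriv]
    ring
  · -- bound
    intro x
    set b := Real.sqrt (u x) with hb
    have hbpos : 0 < b := Real.sqrt_pos.mpr (hupos x)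
    have hbsq : b ^ 2 = u x := Real.sq_sqrt (hupos x).le
    -- |g x.2| ≤ b
    have hgb : |g x.2| ≤ b := by
      rw [hb, show |g x.2| = Real.sqrt (g x.2 ^ 2) by rw [Real.sqrt_sq_eq_abs]]
      refine Real.sqrt_le_sqrt ?_
      rw [hux x]
      nlinarith [sq_nonneg (s x)]
    -- key : n + s + |t| ≤ 4 b
    have hkey : (n : ℝ) + s x + |x.2| ≤ 4 * b := by
      have h1 : |x.2| ≤ 2 * |g x.2| + 1 := by
        have := abs_mul (Real.sin x.2) (Real.cos x.2)
        have hsc : |Real.sin x.2 * Real.cos x.2| ≤ 1 := by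
          rw [abs_mul]
          calc |Real.sin x.2| * |Real.cos x.2| ≤ 1 * 1 :=
                mul_le_mul (Real.abs_sin_le_one _) (Real.abs_cos_le_one _)
                  (abs_nonneg _) zero_le_one
            _ = 1 := by ring
        have h2 : |x.2 - Real.sin x.2 * Real.cos x.2| ≥ |x.2| - 1 := by
          have := abs_sub_abs_le_abs_sub x.2 (Real.sin x.2 * Real.cos x.2)
          linarith [this, hsc]
        have h3 : |g x.2| = |x.2 - Real.sin x.2 * Real.cos x.2| / 2 := by
          rw [hgf x.2, abs_div]; norm_num
        linarith [h2, h3]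
      have hsq : ((n : ℝ) + s x + |x.2|) ^ 2 ≤ (4 * b) ^ 2 := by
        rw [mul_pow, hbsq, hux x]
        have hgnn := abs_nonneg (g x.2)
        have : ((n:ℝ) + s x + |x.2|) ^2 ≤ (2 * (n:ℝ) + s x + 2 * |g x.2|) ^ 2 := by
          have hxb : |x.2| ≤ 2 * |g x.2| + 1 := h1
          have hnn : 0 ≤ (n:ℝ) + s x + |x.2| := by positivity
          nlinarith [hsnn x, abs_nonneg x.2]
        have h4 : (2 * (n:ℝ) + s x + 2 * |g x.2|) ^ 2 ≤
            16 * ((n:ℝ)^2 + s x ^ 2 + g x.2 ^ 2) := by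
          have := sq_abs (g x.2)
          nlinarith [sq_nonneg ((n:ℝ) - s x), sq_nonneg ((n:ℝ) - 2*|g x.2|),
            sq_nonneg (s x - 2*|g x.2|), hsnn x, hgnn]
        linarith
      have hnn : 0 ≤ (n : ℝ) + s x + |x.2| := by positivity
      nlinarith
    have hpos : (0:ℝ) < (n : ℝ) + s x + |x.2| := by
      have := hsnn x; have := abs_nonneg x.2; linarith
    -- |F x| ≤ N * b ^ (-N-1)
    have hFb : |(-N * Real.sin x.2 * g x.2 * u x ^ (-(N / 2) - 1))| ≤ N * b ^ (-N - 1) := by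
      have hupow : u x ^ (-(N / 2) - 1) = b ^ (-N - 2) := by
        rw [← hbsq, ← Real.rpow_natCast b 2, ← Real.rpow_mul hbpos.le]
        norm_num
        ring_nf
      rw [abs_mul, abs_mul, abs_mul, hupow, abs_neg, abs_of_pos hN,
        abs_of_pos (Real.rpow_pos_of_pos hbpos _)]
      have h5 : b * b ^ (-N - 2) = b ^ (-N - 1) := by
        nth_rewrite 1 [show b = b ^ (1:ℝ) by rw [Real.rpow_one]]
        rw [← Real.rpow_add hbpos]
        congr 1; ring
      calc N * |Real.sin x.2| * |g x.2| * b ^ (-N - 2)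
          ≤ N * 1 * b * b ^ (-N - 2) := by
            apply mul_le_mul_of_nonneg_right _ (Real.rpow_pos_of_pos hbpos _).le
            apply mul_le_mul _ hgb (abs_nonneg _) (by positivity)
            exact mul_le_mul_of_nonneg_left (Real.abs_sin_le_one _) hN.le
        _ = N * b ^ (-N - 1) := by rw [mul_one, mul_assoc, h5]
    refine hFb.trans ?_
    -- b^(-N-1) ≤ 4^(N+1) * (n+s+|t|)^(-N-1)
    have h6 : ((n : ℝ) + s x + |x.2|) ^ (-N - 1) ≥ (4 * b) ^ (-N - 1) :=
      Real.rpow_le_rpow_of_nonpos hpos hkey (by linarith)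
    have h7 : (4 * b) ^ (-N - 1) = 4 ^ (-N - 1) * b ^ (-N - 1) :=
      Real.mul_rpow (by norm_num) hbpos.le
    have h8 : (0:ℝ) < 4 ^ (-N - 1) := Real.rpow_pos_of_pos (by norm_num) _
    have h9 : (4:ℝ) ^ (N + 1) * 4 ^ (-N - 1) = 1 := by
      rw [← Real.rpow_add (by norm_num : (0:ℝ) < 4)]; norm_num
    have hb1 : b ^ (-N - 1) ≤ 4 ^ (N + 1) * ((n : ℝ) + s x + |x.2|) ^ (-N - 1) := by
      have := h7 ▸ h6
      calc b ^ (-N - 1) = 4 ^ (N+1) * (4 ^ (-N-1) * b ^ (-N-1)) := by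
            rw [← mul_assoc, h9, one_mul]
        _ ≤ 4 ^ (N + 1) * ((n : ℝ) + s x + |x.2|) ^ (-N - 1) := by
            apply mul_le_mul_of_nonneg_left _ (by positivity)
            linarith
    calc N * b ^ (-N - 1) ≤ N * (4 ^ (N + 1) * ((n : ℝ) + s x + |x.2|) ^ (-N - 1)) :=
          mul_le_mul_of_nonneg_left hb1 hN.le
      _ = N * 4 ^ (N + 1) * ((n : ℝ) + s x + |x.2|) ^ (-N - 1) := by ring
end
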